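/- Let G be a group, g ∈ G, and c : G → ℝ a function satisfying c(g^{n+m}) ≤ c(g^n) + c(g^m) ≤ c(g^{n+m}) + 1 for all positive integers n, m. Then μ(g) := lim_{n→∞} c(g^n)/n exists in ℝ, and |c(g^n) − n·μ(g)| ≤ 1 for every positive integer n. -/
import Mathlib

open Filter

theorem quantitative_homogenization
    {G : Type*} [Group G] (g : G) (c : G → ℝ)
    (hsub : ∀ n m : ℕ, 0 < n → 0 < m →
      c (g ^ (n + m)) ≤ c (g ^ n) + c (g ^ m) ∧
        c (g ^ n) + c (g ^ m) ≤ c (g ^ (n + m)) + 1) :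
    ∃ μ : ℝ, Filter.Tendsto (fun n : ℕ => c (g ^ n) / n) Filter.atTop (nhds μ) ∧
      ∀ n : ℕ, 0 < n → |c (g ^ n) - n * μ| ≤ 1 := by
  classical
  set a : ℕ → ℝ := fun n => c (g ^ n) with ha
  set u : ℕ → ℝ := fun n => if n = 0 then 0 else a n with hu
  have hun : ∀ n : ℕ, 0 < n → u n = a n := by
    intro n hn; simp [hu, hn.ne']
  have hsubu : Subadditive u := by
    intro m n
    rcases Nat.eq_zero_or_pos m with hm | hm
    · simp [hu, hm]
    rcases Nat.eq_zero_or_pos n with hn | hn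
    · simp [hu, hn]
    · rw [hun _ hm, hun _ hn, hun _ (Nat.add_pos_left hm n)]
      exact (hsub m n hm hn).1
  -- key inequality 1 : a (k*n) ≤ k * a n
  have key1 : ∀ n : ℕ, 0 < n → ∀ k : ℕ, 0 < k → a (k * n) ≤ (k : ℝ) * a n := by
    intro n hn k hk
    induction k with
    | zero => exact absurd hk (lt_irrefl 0)
    | succ k ih =>
      rcases Nat.eq_zero_or_pos k with hk0 | hk0
      · subst hk0; simp
      · have h1 := (hsub (k * n) n (Nat.mul_pos hk0 hn) hn).1
        have h2 := ih hk0
        have : a ((k + 1) * n) ≤ a (k * n) + a n := by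
          rw [add_mul, one_mul]; exact h1
        calc a ((k + 1) * n) ≤ a (k * n) + a n := this
          _ ≤ (k : ℝ) * a n + a n := by linarith
          _ = ((k + 1 : ℕ) : ℝ) * a n := by push_cast; ring
  -- key inequality 2 : k * a n ≤ a (k*n) + (k-1)
  have key2 : ∀ n : ℕ, 0 < n → ∀ k : ℕ, 0 < k →
      (k : ℝ) * a n ≤ a (k * n) + ((k : ℝ) - 1) := by
    intro n hn k hk
    induction k with
    | zero => exact absurd hk (lt_irrefl 0)
    | succ k ih =>
      rcases Nat.eq_zero_or_pos k with hk0 | hk0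
      · subst hk0; simp
      · have h1 := (hsub (k * n) n (Nat.mul_pos hk0 hn) hn).2
        have h2 := ih hk0
        have h1' : a (k * n) + a n ≤ a ((k + 1) * n) + 1 := by
          rw [show (k + 1) * n = k * n + n by ring]; exact h1
        push_cast
        push_cast at h2
        linarith [h1']
  -- lower bound for u n / n
  have hbdd : BddBelow (Set.range fun n : ℕ => u n / n) := by
    refine ⟨min 0 (a 1 - 1), ?_⟩
    rintro x ⟨n, rfl⟩
    dsimp only
    rcases Nat.eq_zero_or_pos n with hn | hn
    · simp [hu, hn]
    · have h2 := key2 1 Nat.one_pos n hn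
      rw [mul_one] at h2
      have hnr : (0 : ℝ) < n := by exact_mod_cast hn
      have : (a 1 - 1) * n ≤ a n := by nlinarith
      have : a 1 - 1 ≤ a n / n := (le_div_iff₀ hnr).2 this
      rw [hun _ hn]
      exact le_trans (min_le_right _ _) this
  set μ := hsubu.lim with hμ
  have hT : Tendsto (fun n : ℕ => u n / n) atTop (nhds μ) := hsubu.tendsto_lim hbdd
  refine ⟨μ, ?_, ?_⟩
  · refine hT.congr fun n => ?_
    rcases Nat.eq_zero_or_pos n with hn | hn
    · simp [hu, hn]
    · rw [hun _ hn]
  · intro n hn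
    have hnr : (0 : ℝ) < n := by exact_mod_cast hn
    -- subsequence k ↦ u (k*n) / (k*n) tends to μ
    have hmono : Tendsto (fun k : ℕ => k * n) atTop atTop :=
      tendsto_atTop_mono (fun k => Nat.le_mul_of_pos_right k hn) tendsto_id
    have hTsub : Tendsto (fun k : ℕ => u (k * n) / ((k * n : ℕ) : ℝ)) atTop (nhds μ) :=
      hT.comp hmono
    have hupper : μ ≤ a n / n := by
      refine le_of_tendsto hTsub ?_
      filter_upwards [eventually_ge_atTop 1] with k hk
      have hkpos : 0 < k := hk
      have hkr : (0 : ℝ) < k := by exact_mod_cast hkpos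
      rw [hun _ (Nat.mul_pos hkpos hn)]
      have h1 := key1 n hn k hkpos
      have : ((k * n : ℕ) : ℝ) = (k : ℝ) * n := by push_cast; ring
      rw [this]
      rw [div_le_div_iff₀ (by positivity) hnr]
      nlinarith
    have hlower : (a n - 1) / n ≤ μ := by
      refine ge_of_tendsto hTsub ?_
      filter_upwards [eventually_ge_atTop 1] with k hk
      have hkpos : 0 < k := hk
      have hkr : (0 : ℝ) < k := by exact_mod_cast hkpos
      rw [hun _ (Nat.mul_pos hkpos hn)]
      have h2 := key2 n hn k hkpos
      have hcast : ((k * n : ℕ) : ℝ) = (k : ℝ) * n := by push_cast; ring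
      rw [hcast, div_le_div_iff₀ hnr (by positivity)]
      nlinarith
    have h1 : a n - 1 ≤ (n : ℝ) * μ := by
      have := (div_le_iff₀ hnr).1 hlower
      linarith
    have h2 : (n : ℝ) * μ ≤ a n := by
      have := (le_div_iff₀ hnr).1 hupper
      linarith
    rw [abs_le]
    constructor <;> [linarith; linarith]
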